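/- Let f = (f¹,f²,f³) : ℝ³ → ℝ³ be a smooth contact map of the first Heisenberg group with λ(f) := Xf¹·Yf² − Xf²·Yf¹, where θ = dt − (1/2)x dy + (1/2)y dx, and let ω₁, ω₂ : ℝ³ → ℝ be smooth. Then the pullback of the 2-form ω₁ dx∧θ + ω₂ dy∧θ by f is again of this type, with f^*(dx ∧ θ) = Xf¹·λ(f) dx∧θ + Yf¹·λ(f) dy∧θ and f^*(dy ∧ θ) = Xf²·λ(f) dx∧θ + Yf²·λ(f) dy∧θ. -/

import Mathlib

/-- The horizontal vector field `X g := ∂_x g − (y/2)·∂_t g` on `ℝ³` with coordinates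
`(x, y, t) = (p 0, p 1, p 2)`. -/
noncomputable def Xd (g : (Fin 3 → ℝ) → ℝ) : (Fin 3 → ℝ) → ℝ :=
  fun p => fderiv ℝ g p (Pi.single 0 1) - p 1 / 2 * fderiv ℝ g p (Pi.single 2 1)

/-- The horizontal vector field `Y g := ∂_y g + (x/2)·∂_t g`. -/
noncomputable def Yd (g : (Fin 3 → ℝ) → ℝ) : (Fin 3 → ℝ) → ℝ :=
  fun p => fderiv ℝ g p (Pi.single 1 1) + p 0 / 2 * fderiv ℝ g p (Pi.single 2 1)

/-- The vertical vector field `T g := ∂_t g`. -/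
noncomputable def Td (g : (Fin 3 → ℝ) → ℝ) : (Fin 3 → ℝ) → ℝ :=
  fun p => fderiv ℝ g p (Pi.single 2 1)

/-- A map `f = (f¹, f², f³) : ℝ³ → ℝ³` is a contact map of the first Heisenberg group if
`Xf³ + (1/2)f²·Xf¹ − (1/2)f¹·Xf² = 0` and `Yf³ + (1/2)f²·Yf¹ − (1/2)f¹·Yf² = 0`
identically. -/
def IsContact3 (f : (Fin 3 → ℝ) → (Fin 3 → ℝ)) : Prop :=
  (∀ p, Xd (fun q => f q 2) p + (1/2) * f p 1 * Xd (fun q => f q 0) p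
      - (1/2) * f p 0 * Xd (fun q => f q 1) p = 0)
  ∧ (∀ p, Yd (fun q => f q 2) p + (1/2) * f p 1 * Yd (fun q => f q 0) p
      - (1/2) * f p 0 * Yd (fun q => f q 1) p = 0)

/-- `λ(f) := Xf¹·Yf² − Xf²·Yf¹`. -/
noncomputable def lam3 (f : (Fin 3 → ℝ) → (Fin 3 → ℝ)) : (Fin 3 → ℝ) → ℝ :=
  fun p => Xd (fun q => f q 0) p * Yd (fun q => f q 1) p
    - Xd (fun q => f q 1) p * Yd (fun q => f q 0) p

/-- The contact form `θ = dt − (1/2)x dy + (1/2)y dx` at the point `q`, evaluated on the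
tangent vector `u`. -/
noncomputable def thetaForm (q u : Fin 3 → ℝ) : ℝ :=
  u 2 - (1/2) * q 0 * u 1 + (1/2) * q 1 * u 0

/-- The 2-form `dx ∧ θ` at the point `q`, evaluated on the tangent vectors `u, v`. -/
noncomputable def dxTheta (q u v : Fin 3 → ℝ) : ℝ :=
  u 0 * thetaForm q v - v 0 * thetaForm q u

/-- The 2-form `dy ∧ θ` at the point `q`, evaluated on the tangent vectors `u, v`. -/
noncomputable def dyTheta (q u v : Fin 3 → ℝ) : ℝ :=
  u 1 * thetaForm q v - v 1 * thetaForm q u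

lemma clm_apply_decomp (L : (Fin 3 → ℝ) →L[ℝ] ℝ) (w : Fin 3 → ℝ) :
    L w = w 0 * L (Pi.single 0 1) + w 1 * L (Pi.single 1 1) + w 2 * L (Pi.single 2 1) := by
  have h : w = w 0 • (Pi.single 0 1 : Fin 3 → ℝ) + w 1 • (Pi.single 1 1 : Fin 3 → ℝ)
      + w 2 • (Pi.single 2 1 : Fin 3 → ℝ) := by
    funext j; fin_cases j <;> simp [Pi.single_apply]
  rw [h]; simp

lemma fderiv_comp_proj (f : (Fin 3 → ℝ) → (Fin 3 → ℝ)) (hf : ContDiff ℝ (⊤ : ℕ∞) f) (i : Fin 3)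
    (p w : Fin 3 → ℝ) : fderiv ℝ f p w i = fderiv ℝ (fun q => f q i) p w := by
  have hd : DifferentiableAt ℝ f p := (hf.differentiable (by simp)) p
  have h := ((ContinuousLinearMap.proj (R := ℝ) (φ := fun _ : Fin 3 => ℝ) i).hasFDerivAt.comp p
      hd.hasFDerivAt).fderiv
  rw [show (fun q => f q i) = (fun q => (f q) i) from rfl]
  erw [h]; rfl

lemma snd_symm (g : (Fin 3 → ℝ) → ℝ) (hg : ContDiff ℝ (⊤ : ℕ∞) g) (p a b : Fin 3 → ℝ) :
    fderiv ℝ (fderiv ℝ g) p a b = fderiv ℝ (fderiv ℝ g) p b a :=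
  second_derivative_symmetric (fun y => (hg.differentiable (by simp) y).hasFDerivAt)
    (((contDiff_infty_iff_fderiv.mp hg).2.differentiable (by simp) p).hasFDerivAt) a b

lemma hasFDerivAt_sndd (g : (Fin 3 → ℝ) → ℝ) (hg : ContDiff ℝ (⊤ : ℕ∞) g) (p a : Fin 3 → ℝ) :
    HasFDerivAt (fun q => fderiv ℝ g q a)
      ((ContinuousLinearMap.apply ℝ ℝ a).comp (fderiv ℝ (fderiv ℝ g) p)) p :=
  (ContinuousLinearMap.apply ℝ ℝ a).hasFDerivAt.comp p
    (((contDiff_infty_iff_fderiv.mp hg).2.differentiable (by simp)) p).hasFDerivAt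

lemma mu_eq_lam (f : (Fin 3 → ℝ) → (Fin 3 → ℝ)) (hf : ContDiff ℝ (⊤ : ℕ∞) f) (hc : IsContact3 f)
    (p : Fin 3 → ℝ) :
    Td (fun q => f q 2) p + (1/2) * f p 1 * Td (fun q => f q 0) p
      - (1/2) * f p 0 * Td (fun q => f q 1) p = lam3 f p := by
  have hfi : ∀ i : Fin 3, ContDiff ℝ (⊤ : ℕ∞) (fun q => f q i) :=
    fun i => contDiff_pi.mp (hf.of_le (by simp)) i
  have hgd : ∀ (i : Fin 3) (q : Fin 3 → ℝ),
      HasFDerivAt (fun r => f r i) (fderiv ℝ (fun r => f r i) q) q :=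
    fun i q => (((hfi i).differentiable (by simp)) q).hasFDerivAt
  have hA : ∀ (i : Fin 3) (a : Fin 3 → ℝ),
      HasFDerivAt (fun q => fderiv ℝ (fun r => f r i) q a)
        ((ContinuousLinearMap.apply ℝ ℝ a).comp (fderiv ℝ (fderiv ℝ (fun r => f r i)) p)) p :=
    fun i a => hasFDerivAt_sndd _ (hfi i) p a
  have hproj : ∀ (j : Fin 3), HasFDerivAt (fun q : Fin 3 → ℝ => q j)
      (ContinuousLinearMap.proj (R := ℝ) (φ := fun _ : Fin 3 => ℝ) j) p :=
    fun j => (ContinuousLinearMap.proj (R := ℝ) (φ := fun _ : Fin 3 => ℝ) j).hasFDerivAt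
  have hsymm : ∀ (i : Fin 3) (a b : Fin 3 → ℝ),
      fderiv ℝ (fderiv ℝ (fun r => f r i)) p a b
        = fderiv ℝ (fderiv ℝ (fun r => f r i)) p b a :=
    fun i a b => snd_symm _ (hfi i) p a b
  -- derivative of the X-contact equation
  have hQhas := (((hA 2 (Pi.single 0 1)).sub
        (((hproj 1).const_mul ((1:ℝ)/2)).mul (hA 2 (Pi.single 2 1)))).add
      (((hgd 1 p).const_mul ((1:ℝ)/2)).mul ((hA 0 (Pi.single 0 1)).sub
        (((hproj 1).const_mul ((1:ℝ)/2)).mul (hA 0 (Pi.single 2 1)))))).sub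
      (((hgd 0 p).const_mul ((1:ℝ)/2)).mul ((hA 1 (Pi.single 0 1)).sub
        (((hproj 1).const_mul ((1:ℝ)/2)).mul (hA 1 (Pi.single 2 1)))))
  have hQ0 : HasFDerivAt (fun _ : Fin 3 → ℝ => (0:ℝ)) _ p :=
    hQhas.congr_of_eventuallyEq (Filter.Eventually.of_forall (fun q => by
      beta_reduce
      simp only [Pi.add_apply, Pi.sub_apply, Pi.mul_apply]
      have h := hc.1 q
      simp only [Xd] at h
      linear_combination (-1 : ℝ) * h))
  have hQD := hQ0.unique (hasFDerivAt_const (0:ℝ) p)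
  have hQ1 := congrArg (fun L => L (Pi.single 1 1 : Fin 3 → ℝ)) hQD
  have hQ2 := congrArg (fun L => L (Pi.single 2 1 : Fin 3 → ℝ)) hQD
  -- derivative of the Y-contact equation
  have hRhas := (((hA 2 (Pi.single 1 1)).add
        (((hproj 0).const_mul ((1:ℝ)/2)).mul (hA 2 (Pi.single 2 1)))).add
      (((hgd 1 p).const_mul ((1:ℝ)/2)).mul ((hA 0 (Pi.single 1 1)).add
        (((hproj 0).const_mul ((1:ℝ)/2)).mul (hA 0 (Pi.single 2 1)))))).sub
      (((hgd 0 p).const_mul ((1:ℝ)/2)).mul ((hA 1 (Pi.single 1 1)).add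
        (((hproj 0).const_mul ((1:ℝ)/2)).mul (hA 1 (Pi.single 2 1)))))
  have hR0 : HasFDerivAt (fun _ : Fin 3 → ℝ => (0:ℝ)) _ p :=
    hRhas.congr_of_eventuallyEq (Filter.Eventually.of_forall (fun q => by
      beta_reduce
      simp only [Pi.add_apply, Pi.sub_apply, Pi.mul_apply]
      have h := hc.2 q
      simp only [Yd] at h
      linear_combination (-1 : ℝ) * h))
  have hRD := hR0.unique (hasFDerivAt_const (0:ℝ) p)
  have hR1 := congrArg (fun L => L (Pi.single 0 1 : Fin 3 → ℝ)) hRD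
  have hR2 := congrArg (fun L => L (Pi.single 2 1 : Fin 3 → ℝ)) hRD
  simp only [ContinuousLinearMap.add_apply, ContinuousLinearMap.sub_apply,
    ContinuousLinearMap.comp_apply, ContinuousLinearMap.apply_apply,
    ContinuousLinearMap.proj_apply, ContinuousLinearMap.zero_apply,
    ContinuousLinearMap.smul_apply, smul_eq_mul, Pi.single_apply] at hQ1 hQ2 hR1 hR2
  simp only [Td, lam3, Xd, Yd]
  rw [hsymm 0 (Pi.single 1 1) (Pi.single 0 1)] at hQ1
  rw [hsymm 1 (Pi.single 1 1) (Pi.single 0 1)] at hQ1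
  rw [hsymm 2 (Pi.single 1 1) (Pi.single 0 1)] at hQ1
  rw [hsymm 0 (Pi.single 2 1) (Pi.single 0 1)] at hQ2
  rw [hsymm 1 (Pi.single 2 1) (Pi.single 0 1)] at hQ2
  rw [hsymm 2 (Pi.single 2 1) (Pi.single 0 1)] at hQ2
  rw [hsymm 0 (Pi.single 2 1) (Pi.single 1 1)] at hR2
  rw [hsymm 1 (Pi.single 2 1) (Pi.single 1 1)] at hR2
  rw [hsymm 2 (Pi.single 2 1) (Pi.single 1 1)] at hR2
  norm_num at hQ1 hQ2 hR1 hR2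
  simp only [Fin.reduceEq, reduceIte, if_false] at hQ2 hR2
  linear_combination hR1 - p 1 / 2 * hR2 - hQ1 - p 0 / 2 * hQ2

lemma theta_pull (f : (Fin 3 → ℝ) → (Fin 3 → ℝ)) (hf : ContDiff ℝ (⊤ : ℕ∞) f) (hc : IsContact3 f)
    (p w : Fin 3 → ℝ) :
    thetaForm (f p) (fderiv ℝ f p w) = lam3 f p * thetaForm p w := by
  have h1 := hc.1 p
  have h2 := hc.2 p
  have h3 := mu_eq_lam f hf hc p
  simp only [thetaForm]
  rw [fderiv_comp_proj f hf 2 p w, fderiv_comp_proj f hf 1 p w, fderiv_comp_proj f hf 0 p w,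
    clm_apply_decomp (fderiv ℝ (fun q => f q 2) p) w,
    clm_apply_decomp (fderiv ℝ (fun q => f q 1) p) w,
    clm_apply_decomp (fderiv ℝ (fun q => f q 0) p) w]
  simp only [Xd, Yd, Td, lam3] at h1 h2 h3 ⊢
  linear_combination w 0 * h1 + w 1 * h2
    + (w 2 - 1/2 * p 0 * w 1 + 1/2 * p 1 * w 0) * h3

/-- For a smooth contact map `f` of `ℍ¹` with `λ(f) := Xf¹·Yf² − Xf²·Yf¹`, the pullback by
`f` of the 2-forms `dx∧θ` and `dy∧θ` satisfies
`f^*(dx ∧ θ) = Xf¹·λ(f) dx∧θ + Yf¹·λ(f) dy∧θ` and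
`f^*(dy ∧ θ) = Xf²·λ(f) dx∧θ + Yf²·λ(f) dy∧θ`:
for any pair of tangent vectors `u, v ∈ ℝ³`,
`(dx∧θ)_{f(p)}(Df·u, Df·v) = λ(f)(p)·( Xf¹(p)·(dx∧θ)_p(u,v) + Yf¹(p)·(dy∧θ)_p(u,v) )`,
and similarly for `dy∧θ` with `Xf², Yf²`. -/
theorem pullback_two_forms (f : (Fin 3 → ℝ) → (Fin 3 → ℝ))
    (hf : ContDiff ℝ (⊤ : ℕ∞) f) (hc : IsContact3 f)
    (p u v : Fin 3 → ℝ) :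
    dxTheta (f p) (fderiv ℝ f p u) (fderiv ℝ f p v)
        = lam3 f p * (Xd (fun q => f q 0) p * dxTheta p u v
            + Yd (fun q => f q 0) p * dyTheta p u v)
    ∧ dyTheta (f p) (fderiv ℝ f p u) (fderiv ℝ f p v)
        = lam3 f p * (Xd (fun q => f q 1) p * dxTheta p u v
            + Yd (fun q => f q 1) p * dyTheta p u v) := by
  constructor
  · simp only [dxTheta, dyTheta]
    rw [theta_pull f hf hc p u, theta_pull f hf hc p v,
      fderiv_comp_proj f hf 0 p u, fderiv_comp_proj f hf 0 p v,
      clm_apply_decomp (fderiv ℝ (fun q => f q 0) p) u,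
      clm_apply_decomp (fderiv ℝ (fun q => f q 0) p) v]
    simp only [Xd, Yd, lam3, thetaForm]
    ring
  · simp only [dxTheta, dyTheta]
    rw [theta_pull f hf hc p u, theta_pull f hf hc p v,
      fderiv_comp_proj f hf 1 p u, fderiv_comp_proj f hf 1 p v,
      clm_apply_decomp (fderiv ℝ (fun q => f q 1) p) u,
      clm_apply_decomp (fderiv ℝ (fun q => f q 1) p) v]
    simp only [Xd, Yd, lam3, thetaForm]
    ring
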